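/- arXiv:1607.08806 — 6 statements merged into one kernel-verified Lean document; each statement's English description precedes it below -/
import Mathlib

section
/- The subgraph of the n-dimensional hypercube induced by levels k through l has equal bipartition classes (i.e., δ(Q_{n,[k,l]}) = 0) if and only if n is odd and l = n − k, or n is even and [k,l] = [0,n]. -/
/-!
Counting by weight, `δ(Q_{n,[k,l]}) = ∑_{i=k}^{l} (-1)^i C(n,i)`. For `n = m + 1` the partial
alternating sums telescope to `∑_{i ≤ t} (-1)^i C(m+1,i) = (-1)^t C(m,t)`, so
`δ = (-1)^l C(m,l) - (-1)^(k-1) C(m,k-1)` (the second term absent for `k = 0`). Vanishing then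
forces `C(m,l) = C(m,k-1)` with equal signs, i.e. `(k-1) + l = m` with `m` even, by the strict
unimodality of the binomial coefficients.
-/

/-- The weight of a bitstring of length `n`: the number of ones. -/
def wtF {n : ℕ} (x : Fin n → Bool) : ℕ := (Finset.univ.filter (fun i => x i = true)).card

open Finset

namespace Nat

lemma choose_lt_choose_succ {m c : ℕ} (h : 2 * c + 1 < m) : m.choose c < m.choose (c + 1) := by
  have hpos : 0 < m.choose c := choose_pos (by omega)
  refine Nat.lt_of_mul_lt_mul_right (a := c + 1) ?_
  rw [choose_succ_right_eq]
  exact Nat.mul_lt_mul_of_pos_left (by omega) hpos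

lemma choose_lt_choose_of_lt_of_two_mul_le {m a b : ℕ} (hab : a < b) (hb : 2 * b ≤ m) :
    m.choose a < m.choose b := by
  induction b, hab using Nat.le_induction with
  | base => exact choose_lt_choose_succ (by omega)
  | succ c hac ih => exact (ih (by omega)).trans (choose_lt_choose_succ (by omega))

lemma choose_eq_choose_min_sub {m a : ℕ} (ha : a ≤ m) : m.choose a = m.choose (min a (m - a)) := by
  rcases le_total a (m - a) with h | h
  · rw [min_eq_left h]
  · rw [min_eq_right h, choose_symm ha]

lemma add_eq_of_choose_eq_choose {m a b : ℕ} (hab : a ≠ b) (ha : a ≤ m) (hb : b ≤ m)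
    (h : m.choose a = m.choose b) : a + b = m := by
  rw [choose_eq_choose_min_sub ha, choose_eq_choose_min_sub hb] at h
  have hmin : min a (m - a) = min b (m - b) := by
    by_contra hne
    rcases Nat.lt_or_gt_of_ne hne with hlt | hlt
    · exact (choose_lt_choose_of_lt_of_two_mul_le hlt (by omega)).ne h
    · exact (choose_lt_choose_of_lt_of_two_mul_le hlt (by omega)).ne' h
  omega

end Nat

lemma neg_one_pow_eq_neg_one_pow_iff_even_add {a b : ℕ} :
    (-1 : ℤ) ^ a = (-1) ^ b ↔ Even (a + b) := by
  rw [Nat.even_add]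
  rcases Nat.even_or_odd a with ha | ha <;> rcases Nat.even_or_odd b with hb | hb <;>
    simp [ha, hb, ha.neg_one_pow, hb.neg_one_pow, ← Nat.not_odd_iff_even]

lemma neg_one_pow_mul_choose_eq_iff {m j l : ℕ} (hjl : j < l) (hjm : j ≤ m) :
    (-1 : ℤ) ^ l * m.choose l = (-1) ^ j * m.choose j ↔ j + l = m ∧ Even m := by
  have hpos : 0 < m.choose j := Nat.choose_pos hjm
  constructor
  · intro h
    have hchoose : m.choose l = m.choose j := by
      simpa [Int.natAbs_mul, Int.natAbs_pow] using congrArg Int.natAbs h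
    have hlm : l ≤ m := by
      by_contra hlt
      rw [Nat.choose_eq_zero_of_lt (by omega)] at hchoose
      omega
    have hsum : j + l = m := Nat.add_eq_of_choose_eq_choose hjl.ne hjm hlm hchoose.symm
    have hsign : (-1 : ℤ) ^ l = (-1) ^ j := by
      rw [hchoose] at h
      exact mul_right_cancel₀ (by exact_mod_cast hpos.ne') h
    exact ⟨hsum, by rw [← hsum, add_comm]; exact neg_one_pow_eq_neg_one_pow_iff_even_add.1 hsign⟩
  · rintro ⟨hsum, hm⟩
    rw [Nat.choose_symm_of_eq_add (hsum.symm.trans (add_comm j l)),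
      neg_one_pow_eq_neg_one_pow_iff_even_add.2 (by rwa [add_comm, hsum])]

lemma Int.alternating_sum_Icc_succ_choose {m j l : ℕ} (hjl : j ≤ l) :
    ∑ i ∈ Icc (j + 1) l, (-1 : ℤ) ^ i * (m + 1).choose i =
      (-1) ^ l * m.choose l - (-1) ^ j * m.choose j := by
  rw [← Ico_add_one_right_eq_Icc, sum_Ico_eq_sub _ (by omega),
    Int.alternating_sum_range_choose_eq_choose, Int.alternating_sum_range_choose_eq_choose]

lemma sum_filter_even_eq_sum_filter_odd_iff (s : Finset ℕ) (f : ℕ → ℕ) :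
    ∑ i ∈ s with Even i, f i = ∑ i ∈ s with ¬Even i, f i ↔ ∑ i ∈ s, (-1 : ℤ) ^ i * f i = 0 := by
  rw [← sum_filter_add_sum_filter_not s Even]
  have heven : ∑ i ∈ s with Even i, (-1 : ℤ) ^ i * f i = ∑ i ∈ s with Even i, (f i : ℤ) :=
    sum_congr rfl fun i hi => by rw [(mem_filter.1 hi).2.neg_one_pow, one_mul]
  have hodd : ∑ i ∈ s with ¬Even i, (-1 : ℤ) ^ i * f i = -∑ i ∈ s with ¬Even i, (f i : ℤ) := by
    rw [← sum_neg_distrib]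
    exact sum_congr rfl fun i hi => by
      rw [(Nat.not_even_iff_odd.1 (mem_filter.1 hi).2).neg_one_pow, neg_one_mul]
  rw [heven, hodd, ← sub_eq_add_neg, sub_eq_zero]
  exact_mod_cast Iff.rfl

lemma card_wtF_eq (n w : ℕ) : #{x : Fin n → Bool | wtF x = w} = n.choose w := by
  have h := card_powersetCard w (univ : Finset (Fin n))
  rw [card_univ, Fintype.card_fin] at h
  rw [← h]
  refine card_nbij' (fun x => ({i | x i = true} : Finset (Fin n))) (fun s i => decide (i ∈ s))
    ?_ ?_ ?_ ?_
  · intro x hx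
    rw [mem_coe, mem_filter] at hx
    simpa [mem_powersetCard, wtF] using hx.2
  · intro s hs
    rw [mem_coe, mem_powersetCard] at hs
    rw [mem_coe, mem_filter]
    simp [wtF, hs.2]
  · intro x _
    funext i
    simp
  · intro s _
    ext i
    simp

lemma card_wtF_mem (n : ℕ) (s : Finset ℕ) :
    #{x : Fin n → Bool | wtF x ∈ s} = ∑ w ∈ s, n.choose w := by
  rw [card_eq_sum_card_fiberwise (f := wtF) (t := s) (fun x hx => by simpa using hx)]
  refine sum_congr rfl fun w hw => ?_
  rw [filter_filter, ← card_wtF_eq n w]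
  congr 1
  ext x
  simp only [mem_filter, mem_univ, true_and, and_iff_right_iff_imp]
  rintro rfl
  exact hw

/-- `Q_{n,[k,l]}` has equal bipartition classes (given by parity of weight) iff
`n` is odd and `l = n - k`, or `n` is even and `[k,l] = [0,n]`. -/
theorem stmt2 (n k l : ℕ) (hn : 1 ≤ n) (hkl : k ≤ l) (hl : l ≤ n) :
    ((Finset.univ.filter
        (fun x : Fin n → Bool => (k ≤ wtF x ∧ wtF x ≤ l) ∧ Even (wtF x))).card =
     (Finset.univ.filter
        (fun x : Fin n → Bool => (k ≤ wtF x ∧ wtF x ≤ l) ∧ ¬ Even (wtF x))).card)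
    ↔ ((Odd n ∧ l = n - k) ∨ (Even n ∧ k = 0 ∧ l = n)) := by
  obtain ⟨m, rfl⟩ : ∃ m, n = m + 1 := ⟨n - 1, by omega⟩
  simp only [← mem_Icc, ← mem_filter (p := Even), ← mem_filter (p := fun w => ¬Even w)]
  rw [card_wtF_mem, card_wtF_mem, sum_filter_even_eq_sum_filter_odd_iff]
  rcases k with _ | j
  · rw [← Ico_add_one_right_eq_Icc, Nat.Ico_zero_eq_range,
      Int.alternating_sum_range_choose_eq_choose]
    simp only [mul_eq_zero, pow_eq_zero_iff', neg_eq_zero, one_ne_zero, false_and, false_or,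
      Nat.cast_eq_zero, Nat.choose_eq_zero_iff, Nat.sub_zero, ← or_and_right,
      (Nat.even_or_odd (m + 1)).symm, true_and]
    omega
  · rw [Int.alternating_sum_Icc_succ_choose (by omega), sub_eq_zero,
      neg_one_pow_mul_choose_eq_iff (by omega) (by omega)]
    simp only [Nat.add_one_ne_zero, false_and, and_false, or_false, Nat.odd_add_one,
      Nat.not_odd_iff_even, Nat.add_sub_add_right]
    rw [and_comm]
    exact and_congr_right fun _ => by omega
end

section
/- For n ≥ 2 and 0 < k < n, any two cyclically consecutive bitstrings in Γ_{n,k} (the subsequence of the reflected Gray code Γ_n consisting of all weight-k bitstrings) differ in exactly two positions. -/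
/-- The reflected Gray code `Γ_n`. -/
def gray : ℕ → List (List Bool)
  | 0 => [[]]
  | n + 1 => (gray n).map (fun x => x ++ [false]) ++ ((gray n).reverse.map (fun x => x ++ [true]))

/-- `Γ_{n,k}`: the subsequence of `Γ_n` consisting of the bitstrings of weight `k`. -/
def grayLevel (n k : ℕ) : List (List Bool) := (gray n).filter (fun x => x.count true = k)

/-- Hamming distance of two bitstrings (of the same length). -/
def hamming (x y : List Bool) : ℕ := ((x.zip y).filter (fun p => p.1 ≠ p.2)).length

/-!
Splitting `Γ_{n+1}` by its last bit gives `Γ_{n+1,k+1} = Γ_{n,k+1}·0, rev(Γ_{n,k})·1`, so by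
induction on `n` every step inside `Γ_{n,k}` flips two bits, provided the junction does: it joins
the last elements of `Γ_{n,k+1}` and `Γ_{n,k}`. The same recursion shows that `Γ_{n,k}` starts
with `1^k 0^(n-k)` and, for `k > 0`, ends with `1^(k-1) 0^(n-k) 1`. The junction and the
cyclic step from last to first element are then explicit: each flips one bit in the middle and the
last bit.
-/

namespace List

theorem IsChain.rel_get_of_eq_succ_mod {α : Type*} {R : α → α → Prop} {l : List α}
    (hc : l.IsChain R) (hwrap : ∀ x ∈ l.getLast?, ∀ y ∈ l.head?, R x y)
    (i j : Fin l.length) (hij : (j : ℕ) = ((i : ℕ) + 1) % l.length) :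
    R (l.get i) (l.get j) := by
  rcases Nat.lt_or_ge ((i : ℕ) + 1) l.length with hi | hi
  · have hj : (j : ℕ) = i + 1 := by rw [hij, Nat.mod_eq_of_lt hi]
    simpa [hj] using hc.getElem i hi
  · have hne : l ≠ [] := List.ne_nil_of_length_pos (Nat.zero_lt_of_lt i.isLt)
    have hi : (i : ℕ) = l.length - 1 := by omega
    have hj : (j : ℕ) = 0 := by rw [hij, show (i : ℕ) + 1 = l.length by omega, Nat.mod_self]
    simpa [hi, hj, List.getLast_eq_getElem, List.head_eq_getElem] using
      hwrap _ (List.getLast_mem_getLast? hne) _ (List.head_mem_head? hne)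

end List

theorem hamming_append {x₁ y₁ : List Bool} (x₂ y₂ : List Bool) (h : x₁.length = y₁.length) :
    hamming (x₁ ++ x₂) (y₁ ++ y₂) = hamming x₁ y₁ + hamming x₂ y₂ := by
  rw [hamming, List.zip_append h, List.filter_append, List.length_append]; rfl

theorem hamming_self (x : List Bool) : hamming x x = 0 := by
  simp [hamming, List.filter_eq_nil_iff, List.mem_iff_get]

theorem hamming_comm (x y : List Bool) : hamming x y = hamming y x := by
  rw [hamming, hamming, ← List.zip_swap, List.filter_map, List.length_map]
  congr 1
  exact List.filter_congr fun p _ => by simp [eq_comm]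

def DiffersInTwo (x y : List Bool) : Prop := x.length = y.length ∧ hamming x y = 2

namespace DiffersInTwo

theorem symm {x y : List Bool} (h : DiffersInTwo x y) : DiffersInTwo y x :=
  ⟨h.1.symm, hamming_comm x y ▸ h.2⟩

theorem append_right {x y : List Bool} (h : DiffersInTwo x y) (z : List Bool) :
    DiffersInTwo (x ++ z) (y ++ z) :=
  ⟨by simp [h.1], by rw [hamming_append _ _ h.1, h.2, hamming_self]⟩

end DiffersInTwo

theorem differsInTwo_flip_flip (u v : List Bool) (a b : Bool) :
    DiffersInTwo (u ++ a :: v ++ [b]) (u ++ (!a) :: v ++ [!b]) := by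
  have split : ∀ c d : Bool, u ++ c :: v ++ [d] = u ++ ([c] ++ (v ++ [d])) := by simp
  refine ⟨by simp, ?_⟩
  rw [split, split, hamming_append _ _ rfl, hamming_append (x₁ := [a]) (y₁ := [!a]) _ _ rfl,
    hamming_append _ _ rfl, hamming_self, hamming_self]
  cases a <;> cases b <;> rfl

theorem length_of_mem_gray {n : ℕ} {x : List Bool} (hx : x ∈ gray n) : x.length = n := by
  induction n generalizing x with
  | zero => simp_all [gray]
  | succ n ih =>
    simp only [gray, List.mem_append, List.mem_map, List.mem_reverse] at hx
    rcases hx with ⟨y, hy, rfl⟩ | ⟨y, hy, rfl⟩ <;> simp [ih hy]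

theorem grayLevel_eq_nil {n k : ℕ} (h : n < k) : grayLevel n k = [] := by
  refine List.filter_eq_nil_iff.2 fun x hx => ?_
  have := (length_of_mem_gray hx) ▸ List.count_le_length (a := true) (l := x)
  simp only [decide_eq_true_eq]
  omega

theorem grayLevel_succ_succ (n k : ℕ) :
    grayLevel (n + 1) (k + 1) = (grayLevel n (k + 1)).map (· ++ [false]) ++
      (grayLevel n k).reverse.map (· ++ [true]) := by
  simp [grayLevel, gray, List.filter_map, List.filter_reverse, Function.comp_def,
    List.count_append]

theorem grayLevel_zero (n : ℕ) : grayLevel n 0 = [List.replicate n false] := by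
  induction n with
  | zero => rfl
  | succ n ih =>
    have hfalse : grayLevel (n + 1) 0 = (grayLevel n 0).map (· ++ [false]) := by
      simp [grayLevel, gray, List.filter_map, List.filter_reverse, Function.comp_def,
        List.count_append]
    simp [hfalse, ih, List.replicate_succ']

theorem grayLevel_self (n : ℕ) : grayLevel n n = [List.replicate n true] := by
  induction n with
  | zero => rfl
  | succ n ih =>
    simp [grayLevel_succ_succ, grayLevel_eq_nil (Nat.lt_succ_self n), ih, List.replicate_succ']

theorem head?_grayLevel (k m : ℕ) :
    (grayLevel (k + m) k).head? = some (List.replicate k true ++ List.replicate m false) := by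
  induction m generalizing k with
  | zero => simp [grayLevel_self]
  | succ m ih =>
    cases k with
    | zero => simp [grayLevel_zero]
    | succ k =>
      rw [← Nat.add_assoc, grayLevel_succ_succ, List.head?_append, List.head?_map, ih]
      simp [List.replicate_succ']

theorem getLast?_grayLevel (k m : ℕ) :
    (grayLevel (k + m + 1) (k + 1)).getLast? =
      some (List.replicate k true ++ List.replicate m false ++ [true]) := by
  have hne : (grayLevel (k + m) k).reverse.map (· ++ [true]) ≠ [] := by
    simp [← List.head?_eq_none_iff, head?_grayLevel]
  rw [grayLevel_succ_succ, List.getLast?_append_of_ne_nil _ hne, List.getLast?_map,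
    List.getLast?_reverse, head?_grayLevel]
  rfl

theorem differsInTwo_junction {n k : ℕ} (hk : k < n) {x y : List Bool}
    (hx : x ∈ (grayLevel n (k + 1)).getLast?) (hy : y ∈ (grayLevel n k).getLast?) :
    DiffersInTwo (x ++ [false]) (y ++ [true]) := by
  obtain ⟨m, rfl⟩ : ∃ m, n = k + m + 1 := ⟨n - k - 1, by omega⟩
  rw [getLast?_grayLevel, Option.mem_some_iff] at hx
  subst hx
  cases k with
  | zero =>
    rw [grayLevel_zero, List.getLast?_singleton, Option.mem_some_iff] at hy
    subst hy
    simpa [List.replicate_succ'] using differsInTwo_flip_flip (List.replicate m false) [] true false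
  | succ k =>
    rw [show k + 1 + m + 1 = k + (m + 1) + 1 by omega, getLast?_grayLevel,
      Option.mem_some_iff] at hy
    subst hy
    rw [List.replicate_succ' (n := k), List.replicate_succ (n := m)]
    simpa using
      differsInTwo_flip_flip (List.replicate k true) (List.replicate m false ++ [true]) true false

theorem isChain_grayLevel (n k : ℕ) : (grayLevel n k).IsChain DiffersInTwo := by
  induction n generalizing k with
  | zero => cases k <;> simp [grayLevel, gray]
  | succ n ih =>
    cases k with
    | zero => simp [grayLevel_zero]
    | succ k =>
      rw [grayLevel_succ_succ, List.isChain_append, List.isChain_map, List.isChain_map,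
        List.isChain_reverse]
      refine ⟨(ih _).imp fun _ _ h => h.append_right _,
        (ih _).imp fun _ _ h => h.symm.append_right _, fun x hx y hy => ?_⟩
      rcases Nat.lt_or_ge k n with hk | hk
      · rw [List.getLast?_map, Option.mem_map] at hx
        rw [List.head?_map, List.head?_reverse, Option.mem_map] at hy
        obtain ⟨x, hx, rfl⟩ := hx
        obtain ⟨y, hy, rfl⟩ := hy
        exact differsInTwo_junction hk hx hy
      · simp [grayLevel_eq_nil (Nat.lt_succ_of_le hk)] at hx

theorem stmt4_general (n k : ℕ) (hk0 : 0 < k) (hkn : k < n)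
    (i j : Fin (grayLevel n k).length)
    (hij : (j : ℕ) = ((i : ℕ) + 1) % (grayLevel n k).length) :
    hamming ((grayLevel n k).get i) ((grayLevel n k).get j) = 2 := by
  obtain ⟨k, rfl⟩ : ∃ k', k = k' + 1 := ⟨k - 1, by omega⟩
  obtain ⟨m, rfl⟩ : ∃ m, n = k + (m + 1) + 1 := ⟨n - k - 2, by omega⟩
  refine ((isChain_grayLevel _ _).rel_get_of_eq_succ_mod (fun x hx y hy => ?_) i j hij).2
  rw [getLast?_grayLevel, Option.mem_some_iff] at hx
  rw [show k + (m + 1) + 1 = k + 1 + (m + 1) by omega, head?_grayLevel, Option.mem_some_iff] at hy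
  subst hx hy
  convert differsInTwo_flip_flip (List.replicate k true) (List.replicate m false) false true
    using 1
  · simp [List.replicate_succ]
  · simp [List.replicate_succ']

/-- For `n ≥ 2` and `0 < k < n`, any two cyclically consecutive bitstrings in `Γ_{n,k}`
differ in exactly two positions. -/
theorem stmt4 (n k : ℕ) (hn : 2 ≤ n) (hk0 : 0 < k) (hkn : k < n)
    (i j : Fin (grayLevel n k).length)
    (hij : (j : ℕ) = ((i : ℕ) + 1) % (grayLevel n k).length) :
    hamming ((grayLevel n k).get i) ((grayLevel n k).get j) = 2 :=
  stmt4_general n k hk0 hkn i j hij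
end

section
/- A bitstring x = (x_1,...,x_n) of weight k, different from 0^{n−1}1, is an upward vertex of the reflected Gray code Γ_n (i.e., its successor in Γ_n has weight k+1) if and only if k is even and x_1 = 0, or k is odd and x_{i+1} = 0, where i is the smallest index with x_i = 1. -/
namespace List

variable {α : Type*}

theorem modify_append_of_lt_length (f : α → α) {l₁ : List α} (l₂ : List α) {i : ℕ}
    (h : i < l₁.length) : (l₁ ++ l₂).modify i f = l₁.modify i f ++ l₂ := by
  induction l₁ generalizing i with
  | nil => simp at h
  | cons a l ih => cases i <;> simp_all

theorem modify_append_singleton_length (f : α → α) (l : List α) (a : α) :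
    (l ++ [a]).modify l.length f = l ++ [f a] := by
  rw [modify_eq_take_cons_drop (by simp)]
  simp

theorem idxOf_modify_of_idxOf_lt [BEq α] (f : α → α) {l : List α} {a : α} {i : ℕ}
    (h : l.idxOf a < i) : (l.modify i f).idxOf a = l.idxOf a := by
  induction l generalizing i with
  | nil => simp
  | cons b l ih =>
    obtain ⟨i, rfl⟩ : ∃ i', i = i' + 1 := ⟨i - 1, by omega⟩
    rw [idxOf_cons] at h
    cases hb : b == a <;> simp_all [idxOf_cons]

theorem count_true_modify_not_add {x : List Bool} {p : ℕ} (h : p < x.length) :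
    (x.modify p not).count true + x[p].toNat = x.count true + (!x[p]).toNat := by
  obtain ⟨l₁, a, l₂, rfl, rfl, hmodify⟩ := exists_of_modify not h
  rw [hmodify]
  cases a <;> simp <;> omega

theorem even_count_true_modify_not_iff {x : List Bool} {p : ℕ} (h : p < x.length) :
    Even ((x.modify p not).count true) ↔ ¬Even (x.count true) := by
  have hcount := count_true_modify_not_add h
  generalize x[p] = b at hcount
  cases b <;> simp only [Bool.toNat_false, Bool.toNat_true, Bool.not_false, Bool.not_true,
    add_zero] at hcount <;> grind

theorem true_mem_of_odd_count {x : List Bool} (h : Odd (x.count true)) : true ∈ x :=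
  count_pos_iff.1 h.pos

end List

open List

/-- The position of the bit in which `x` differs from its successor in the reflected Gray code. -/
def grayFlipIndex (x : List Bool) : ℕ :=
  if Even (x.count true) then 0 else x.idxOf true + 1

def IsGrayStep (x y : List Bool) : Prop :=
  grayFlipIndex x < x.length ∧ y = x.modify (grayFlipIndex x) not

theorem getD_grayFlipIndex_eq_false_iff (x : List Bool) :
    x.getD (grayFlipIndex x) false = false ↔
      (Even (x.count true) ∧ x.getD 0 false = false) ∨
      (Odd (x.count true) ∧ x.getD (x.idxOf true + 1) false = false) := by
  unfold grayFlipIndex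
  split_ifs with h <;> simp [h, ← Nat.not_even_iff_odd]

theorem grayFlipIndex_append_false (x : List Bool) :
    grayFlipIndex (x ++ [false]) = grayFlipIndex x := by
  have hcount : (x ++ [false]).count true = x.count true := by simp
  unfold grayFlipIndex
  rw [hcount]
  split_ifs with h
  · rfl
  · rw [idxOf_append_of_mem (true_mem_of_odd_count (Nat.not_even_iff_odd.1 h))]

theorem grayFlipIndex_modify_append_true {x : List Bool} (h : grayFlipIndex x < x.length) :
    grayFlipIndex (x.modify (grayFlipIndex x) not ++ [true]) = grayFlipIndex x := by
  have hparity : Even ((x.modify (grayFlipIndex x) not ++ [true]).count true) ↔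
      Even (x.count true) := by
    rw [count_append, count_singleton_self, Nat.even_add_one,
      even_count_true_modify_not_iff h, not_not]
  rw [grayFlipIndex.eq_1 (_ ++ _)]
  simp only [hparity]
  by_cases heven : Even (x.count true)
  · simp [heven, grayFlipIndex]
  · have hflip : grayFlipIndex x = x.idxOf true + 1 := if_neg heven
    have hlt : x.idxOf true < x.idxOf true + 1 := Nat.lt_succ_self _
    have hmem : true ∈ x.modify (x.idxOf true + 1) not := by
      rw [← idxOf_lt_length_iff, idxOf_modify_of_idxOf_lt _ hlt, length_modify]
      omega
    rw [if_neg heven, hflip, idxOf_append_of_mem hmem, idxOf_modify_of_idxOf_lt _ hlt]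

theorem head?_gray (n : ℕ) : (gray n).head? = some (replicate n false) := by
  induction n with
  | zero => rfl
  | succ n ih => simp [gray, ih, replicate_succ']

theorem getLast?_gray_succ (n : ℕ) :
    (gray (n + 1)).getLast? = some (replicate n false ++ [true]) := by
  simp [gray, getLast?_reverse, head?_gray]

theorem grayFlipIndex_eq_length_of_mem_getLast?_gray {n : ℕ} {x : List Bool}
    (h : x ∈ (gray n).getLast?) : grayFlipIndex x = x.length := by
  cases n with
  | zero =>
    obtain rfl : x = [] := by simpa [gray] using h
    rfl
  | succ m =>
    obtain rfl : replicate m false ++ [true] = x := by simpa [getLast?_gray_succ] using h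
    have hidx : (replicate m false ++ [true]).idxOf true = m := by
      rw [idxOf_append_of_notMem (by simp)]
      simp
    simp [grayFlipIndex, count_replicate, hidx]

namespace IsGrayStep

theorem append_false {x y : List Bool} (h : IsGrayStep x y) :
    IsGrayStep (x ++ [false]) (y ++ [false]) := by
  obtain ⟨hlt, rfl⟩ := h
  rw [IsGrayStep, grayFlipIndex_append_false, length_append,
    modify_append_of_lt_length _ _ hlt]
  exact ⟨by omega, rfl⟩

theorem swap_append_true {x y : List Bool} (h : IsGrayStep x y) :
    IsGrayStep (y ++ [true]) (x ++ [true]) := by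
  obtain ⟨hlt, rfl⟩ := h
  rw [IsGrayStep, grayFlipIndex_modify_append_true hlt, length_append, length_modify,
    modify_append_of_lt_length _ _ (by simpa using hlt), modify_modify_eq,
    Bool.involutive_not.comp_self, modify_id]
  exact ⟨by omega, rfl⟩

theorem count_true_eq_succ_iff {x y : List Bool} (h : IsGrayStep x y) :
    y.count true = x.count true + 1 ↔ x.getD (grayFlipIndex x) false = false := by
  obtain ⟨hlt, rfl⟩ := h
  have hcount := count_true_modify_not_add hlt
  rw [getD_eq_getElem _ _ hlt]
  generalize x[grayFlipIndex x] = b at hcount ⊢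
  cases b <;> simp at hcount ⊢ <;> omega

end IsGrayStep

theorem isGrayStep_append_false_append_true {x : List Bool} (h : grayFlipIndex x = x.length) :
    IsGrayStep (x ++ [false]) (x ++ [true]) := by
  rw [IsGrayStep, grayFlipIndex_append_false, h, modify_append_singleton_length]
  exact ⟨by simp, rfl⟩

theorem isChain_isGrayStep_gray (n : ℕ) : (gray n).IsChain IsGrayStep := by
  induction n with
  | zero => exact isChain_singleton _
  | succ n ih =>
    refine isChain_append.2 ⟨?_, ?_, ?_⟩
    · exact (isChain_map _).2 (ih.imp fun _ _ => IsGrayStep.append_false)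
    · exact (isChain_map _).2 (isChain_reverse.2 (ih.imp fun _ _ => IsGrayStep.swap_append_true))
    · intro x hx y hy
      rw [getLast?_map] at hx
      rw [head?_map, head?_reverse] at hy
      obtain ⟨L, hL, rfl⟩ := Option.mem_map.1 hx
      obtain ⟨L', hL', rfl⟩ := Option.mem_map.1 hy
      cases Option.mem_unique hL hL'
      exact isGrayStep_append_false_append_true (grayFlipIndex_eq_length_of_mem_getLast?_gray hL)

/-- Characterization of upward vertices of `Γ_n`: a bitstring `x` of weight `k`, different
from `0^{n-1}1`, has its cyclic successor in `Γ_n` at weight `k+1` iff `k` is even and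
`x_1 = 0`, or `k` is odd and `x_{i+1} = 0`, where `i` is the smallest (1-based) index
with `x_i = 1`. -/
theorem stmt7 (n : ℕ) (hn : 1 ≤ n) (i j : Fin (gray n).length)
    (hij : (j : ℕ) = ((i : ℕ) + 1) % (gray n).length)
    (x : List Bool) (hx : x = (gray n).get i)
    (hlast : x ≠ List.replicate (n - 1) false ++ [true]) :
    ((gray n).get j).count true = x.count true + 1 ↔
      (Even (x.count true) ∧ x.getD 0 false = false) ∨
      (Odd (x.count true) ∧ x.getD (x.idxOf true + 1) false = false) := by
  obtain ⟨m, rfl⟩ : ∃ m, n = m + 1 := ⟨n - 1, by omega⟩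
  have hi : (i : ℕ) + 1 < (gray (m + 1)).length := by
    by_contra hwrap
    have hlastIdx : (gray (m + 1))[(i : ℕ)]? = some (replicate m false ++ [true]) := by
      rw [← getLast?_gray_succ, getLast?_eq_getElem?]
      congr 1
      omega
    exact hlast (by simpa [hx] using hlastIdx)
  have hj : (j : ℕ) = i + 1 := by rw [hij, Nat.mod_eq_of_lt hi]
  have hstep : IsGrayStep x ((gray (m + 1)).get j) := by
    simpa only [hx, get_eq_getElem, hj] using
      isChain_iff_getElem.1 (isChain_isGrayStep_gray (m + 1)) i hi
  rw [hstep.count_true_eq_succ_iff, getD_grayFlipIndex_eq_false_iff]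
end

section
/- In the reflected Gray code Γ_n, the number of weight-k bitstrings whose successor in Γ_n has weight k+1 equals C(n−1,k), and the number of weight-k bitstrings whose successor has weight k−1 equals C(n−1,k−1). -/
namespace List

variable {α β : Type*}

@[simp] theorem consecutivePairs_nil : ([] : List α).consecutivePairs = [] := rfl

@[simp] theorem consecutivePairs_singleton (a : α) : [a].consecutivePairs = [] := rfl

@[simp] theorem consecutivePairs_cons_cons (a b : α) (l : List α) :
    (a :: b :: l).consecutivePairs = (a, b) :: (b :: l).consecutivePairs := rfl

theorem consecutivePairs_append {l₁ l₂ : List α} {a b : α} (hb : l₁.getLast? = some b)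
    (ha : l₂.head? = some a) :
    (l₁ ++ l₂).consecutivePairs = l₁.consecutivePairs ++ (b, a) :: l₂.consecutivePairs := by
  induction l₁ with
  | nil => simp at hb
  | cons x t ih =>
    cases t with
    | nil =>
      obtain ⟨a, l₂, rfl⟩ : ∃ a' l, l₂ = a' :: l := by cases l₂ <;> simp_all
      simp_all
    | cons y t => simp_all

theorem consecutivePairs_map (f : α → β) (l : List α) :
    (l.map f).consecutivePairs = l.consecutivePairs.map (Prod.map f f) := by
  rw [consecutivePairs, ← map_tail, zip_map]

theorem consecutivePairs_reverse (l : List α) :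
    l.reverse.consecutivePairs = (l.consecutivePairs.map Prod.swap).reverse := by
  induction l with
  | nil => rfl
  | cons x t ih =>
    cases t with
    | nil => rfl
    | cons y t =>
      rw [reverse_cons, consecutivePairs_append (b := y) (a := x) (by simp) rfl, ih]
      simp

def cyclicPairs (l : List α) : List (α × α) := l.zip (l.rotate 1)

theorem cyclicPairs_eq {l : List α} {a b : α} (ha : l.head? = some a)
    (hb : l.getLast? = some b) : l.cyclicPairs = l.consecutivePairs ++ [(b, a)] := by
  obtain ⟨t, rfl⟩ : ∃ t, l = a :: t := by cases l <;> simp_all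
  rw [cyclicPairs, ← consecutivePairs_singleton a, ← consecutivePairs_append hb rfl,
    rotate_cons_succ, rotate_zero]
  show _ = ((a :: t) ++ [a]).zip (t ++ [a])
  rw [← append_nil (t ++ [a]), zip_append (by simp), zip_nil_right, append_nil, append_nil]

theorem cyclicPairs_map (f : α → β) (l : List α) :
    (l.map f).cyclicPairs = l.cyclicPairs.map (Prod.map f f) := by
  rw [cyclicPairs, ← map_rotate, zip_map, cyclicPairs]

theorem ofFn_get_succ_eq_cyclicPairs (l : List α) :
    ofFn (fun i : Fin l.length => (l.get i, l.get ⟨(i + 1) % l.length, Nat.mod_lt _ i.pos⟩)) =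
      l.cyclicPairs := by
  apply ext_get <;> simp [cyclicPairs, getElem_rotate]

theorem card_filter_get_succ_eq_count_cyclicPairs_map (l : List α) (g : α → β) [DecidableEq β]
    (a b : β) :
    (Finset.univ.filter (fun i : Fin l.length => g (l.get i) = a ∧
      g (l.get ⟨(i + 1) % l.length, Nat.mod_lt _ i.pos⟩) = b)).card =
      (l.map g).cyclicPairs.count (a, b) := by
  rw [cyclicPairs_map, ← l.ofFn_get_succ_eq_cyclicPairs, ofFn_eq_map, map_map, count,
    countP_map, Fin.univ_def]
  simp only [Finset.card, Finset.filter, Multiset.filter_coe, Multiset.coe_card,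
    countP_eq_length_filter]
  congr 2
  funext i
  simp only [Function.comp_apply, Prod.map, Bool.beq_eq_decide_eq, Prod.mk.injEq, Bool.decide_and]

theorem cyclicPairs_append_reverse_map_perm {l : List α} {f : α → α} {a : α}
    (ha : l.head? = some a) (hfa : l.getLast? = some (f a)) :
    (l ++ l.reverse.map f).cyclicPairs ~
      l.cyclicPairs ++ l.cyclicPairs.map (fun p => (f p.2, f p.1)) := by
  have hr : (l.reverse.map f).head? = some (f (f a)) := by simp [hfa]
  rw [cyclicPairs_eq (a := a) (b := f a) (by simp [head?_append, ha])
      (by simp [getLast?_append, ha]), cyclicPairs_eq ha hfa, consecutivePairs_append hfa hr,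
    consecutivePairs_map, consecutivePairs_reverse]
  simp only [map_append, map_reverse, map_map, map_cons, map_nil, append_assoc]
  refine Perm.append_left _ ?_
  set M := l.consecutivePairs.map (fun p => (f p.2, f p.1))
  calc (f a, f (f a)) :: (M.reverse ++ [(f a, a)])
      _ ~ (f a, f (f a)) :: (f a, a) :: M :=
        (perm_append_comm.trans ((reverse_perm M).cons _)).cons _
      _ ~ (f a, a) :: (f a, f (f a)) :: M := Perm.swap _ _ _
      _ ~ (f a, a) :: (M ++ [(f a, f (f a))]) := (perm_append_singleton _ _).symm.cons _

end List

section SwapSucc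

variable (L : List (ℕ × ℕ))

theorem count_map_swap_succ_succ (a b : ℕ) :
    (L.map fun p => (p.2 + 1, p.1 + 1)).count (a + 1, b + 1) = L.count (b, a) := by
  simpa using L.count_map_of_injective (fun p => (p.2 + 1, p.1 + 1))
    (fun p q h => by simp at h; ext <;> omega) (b, a)

theorem count_map_swap_succ_zero_left (b : ℕ) :
    (L.map fun p => (p.2 + 1, p.1 + 1)).count (0, b) = 0 := by
  simp [List.count_eq_zero]

theorem count_map_swap_succ_zero_right (a : ℕ) :
    (L.map fun p => (p.2 + 1, p.1 + 1)).count (a, 0) = 0 := by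
  simp [List.count_eq_zero]

end SwapSucc

def grayWeights (n : ℕ) : List ℕ := (gray n).map (List.count true)

theorem grayWeights_succ (n : ℕ) :
    grayWeights (n + 1) = grayWeights n ++ (grayWeights n).reverse.map (· + 1) := by
  simp [grayWeights, gray, List.map_reverse, Function.comp_def]

theorem head?_grayWeights (n : ℕ) : (grayWeights n).head? = some 0 := by
  induction n with
  | zero => rfl
  | succ n ih => simp [grayWeights_succ, List.head?_append, ih]

theorem getLast?_grayWeights_succ (n : ℕ) : (grayWeights (n + 1)).getLast? = some 1 := by
  simp [grayWeights_succ, List.getLast?_append, head?_grayWeights]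

theorem count_cyclicPairs_grayWeights_succ (n j : ℕ) :
    (grayWeights (n + 1)).cyclicPairs.count (j, j + 1) = n.choose j ∧
      (grayWeights (n + 1)).cyclicPairs.count (j + 1, j) = n.choose j := by
  induction n generalizing j with
  | zero => cases j <;> simp [grayWeights, gray, List.cyclicPairs]
  | succ n ih =>
    have hperm := List.cyclicPairs_append_reverse_map_perm (f := (· + 1))
      (head?_grayWeights (n + 1)) (getLast?_grayWeights_succ n)
    rw [grayWeights_succ, hperm.count_eq, hperm.count_eq, List.count_append, List.count_append]
    cases j with
    | zero =>
      rw [count_map_swap_succ_zero_left, count_map_swap_succ_zero_right, (ih 0).1, (ih 0).2]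
      simp
    | succ i =>
      rw [count_map_swap_succ_succ, count_map_swap_succ_succ, (ih (i + 1)).1, (ih (i + 1)).2,
        (ih i).1, (ih i).2, Nat.choose_succ_succ']
      omega

theorem stmt8_general (n k : ℕ) (hn : 1 ≤ n) :
    ((Finset.univ.filter (fun i : Fin (gray n).length =>
        ((gray n).get i).count true = k ∧
        ((gray n).get ⟨((i : ℕ) + 1) % (gray n).length, Nat.mod_lt _ i.pos⟩).count true
          = k + 1)).card = (n - 1).choose k)
    ∧ ((Finset.univ.filter (fun i : Fin (gray n).length =>
        ((gray n).get i).count true = k ∧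
        ((gray n).get ⟨((i : ℕ) + 1) % (gray n).length, Nat.mod_lt _ i.pos⟩).count true + 1
          = k)).card = if k = 0 then 0 else (n - 1).choose (k - 1)) := by
  obtain ⟨m, rfl⟩ := Nat.exists_eq_add_of_le' hn
  rw [Nat.add_sub_cancel]
  refine ⟨?_, ?_⟩
  · rw [List.card_filter_get_succ_eq_count_cyclicPairs_map]
    exact (count_cyclicPairs_grayWeights_succ m k).1
  · cases k with
    | zero => simp
    | succ j =>
      simp only [Nat.add_right_cancel_iff, List.card_filter_get_succ_eq_count_cyclicPairs_map]
      exact (count_cyclicPairs_grayWeights_succ m j).2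

/-- In `Γ_n`, the number of weight-`k` bitstrings whose cyclic successor has weight `k+1`
is `C(n-1,k)`, and the number of weight-`k` bitstrings whose cyclic successor has weight
`k-1` is `C(n-1,k-1)` (with the convention `C(n-1,-1) = 0`, encoded by the case `k = 0`). -/
theorem stmt8 (n k : ℕ) (hn : 1 ≤ n) (hk : k ≤ n) :
    ((Finset.univ.filter (fun i : Fin (gray n).length =>
        ((gray n).get i).count true = k ∧
        ((gray n).get ⟨((i : ℕ) + 1) % (gray n).length, Nat.mod_lt _ i.pos⟩).count true
          = k + 1)).card = (n - 1).choose k)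
    ∧ ((Finset.univ.filter (fun i : Fin (gray n).length =>
        ((gray n).get i).count true = k ∧
        ((gray n).get ⟨((i : ℕ) + 1) % (gray n).length, Nat.mod_lt _ i.pos⟩).count true + 1
          = k)).card = if k = 0 then 0 else (n - 1).choose (k - 1)) :=
  stmt8_general n k hn
end

section
/- Let x be an upward vertex of weight k (0 < k < n) in the reflected Gray code, and let i be the smallest index with x_i = 1. Then the successor of x in Γ_{n,k} is obtained from x by flipping bits i−1 and i if k is even, and by flipping bits i+1 and i if k is odd; moreover, the common upper neighbor up(x, s(x)) is obtained from x by flipping bit i−1 (k even) or bit i+1 (k odd). -/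
/-- Flip bit at (1-based) position `j` of the bitstring `x`. -/
def flipBit (x : List Bool) (j : ℕ) : List Bool := x.set (j - 1) (!(x.getD (j - 1) false))

namespace GrayCode

open Finset

def grayVal (m : ℕ) : ℕ := m ^^^ m / 2

lemma testBit_grayVal (m i : ℕ) : (grayVal m).testBit i = (m.testBit i ^^ m.testBit (i + 1)) := by
  simp [grayVal, Nat.testBit_xor, Nat.testBit_div_two]

lemma grayVal_xor (a b : ℕ) : grayVal (a ^^^ b) = grayVal a ^^^ grayVal b := by
  simp only [grayVal, Nat.xor_div_two]
  ac_rfl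

lemma grayVal_lt_two_pow {m n : ℕ} (h : m < 2 ^ n) : grayVal m < 2 ^ n :=
  Nat.xor_lt_two_pow h ((Nat.div_le_self _ _).trans_lt h)

lemma eq_zero_of_grayVal_eq_zero {m : ℕ} (h : grayVal m = 0) : m = 0 := by
  have : m = m / 2 := by simpa [grayVal, Nat.xor_assoc] using congrArg (· ^^^ m / 2) h
  omega

lemma grayVal_injective : Function.Injective grayVal := fun a b h =>
  xor_eq_zero_iff.mp (eq_zero_of_grayVal_eq_zero (by rw [grayVal_xor, h, Nat.xor_self]))

lemma two_pow_mul_add_eq_xor (c : ℕ) {s t : ℕ} (ht : t < 2 ^ s) :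
    2 ^ s * c + t = 2 ^ s * c ^^^ t := by
  apply Nat.eq_of_testBit_eq
  intro i
  rw [Nat.testBit_xor, Nat.testBit_two_pow_mul_add c ht, ← add_zero (2 ^ s * c),
    Nat.testBit_two_pow_mul_add c (Nat.two_pow_pos s)]
  split_ifs with hi
  · simp
  · simp [Nat.testBit_lt_two_pow (ht.trans_le (Nat.pow_le_pow_right two_pos (not_lt.mp hi)))]

lemma grayVal_two_pow_mul_add (c : ℕ) {s t : ℕ} (ht : t < 2 ^ s) :
    grayVal (2 ^ s * c + t) = grayVal (2 ^ s * c) ^^^ grayVal t := by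
  rw [two_pow_mul_add_eq_xor c ht, grayVal_xor]

lemma grayVal_add_of_mod_add_lt {m j s : ℕ} (h : m % 2 ^ s + j < 2 ^ s) :
    grayVal (m + j) = grayVal m ^^^ grayVal (m % 2 ^ s) ^^^ grayVal (m % 2 ^ s + j) := by
  obtain ⟨c, r, hr, rfl⟩ : ∃ c r, r < 2 ^ s ∧ m = 2 ^ s * c + r :=
    ⟨m / 2 ^ s, m % 2 ^ s, Nat.mod_lt _ (Nat.two_pow_pos s), (Nat.div_add_mod m _).symm⟩
  rw [Nat.mul_add_mod_self_left, Nat.mod_eq_of_lt hr] at h ⊢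
  rw [add_assoc, grayVal_two_pow_mul_add c h, grayVal_two_pow_mul_add c hr, xor_cancel_right]

lemma grayVal_two_pow_add {s u : ℕ} (hu : u < 2 ^ s) :
    grayVal (2 ^ s + u) = 2 ^ s ^^^ grayVal (2 ^ s - 1 - u) := by
  have hsum (i : ℕ) : (2 ^ s + u).testBit i = if i < s then u.testBit i else decide (i = s) := by
    rw [← mul_one (2 ^ s), Nat.testBit_two_pow_mul_add 1 hu, ← Nat.pow_zero 2,
      Nat.testBit_two_pow]
    split_ifs
    · rfl
    · simp only [decide_eq_decide]; omega
  have hsub (i : ℕ) : (2 ^ s - 1 - u).testBit i = (decide (i < s) && !u.testBit i) := by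
    rw [Nat.sub_sub, Nat.add_comm, Nat.testBit_two_pow_sub_succ hu]
  apply Nat.eq_of_testBit_eq
  intro i
  rw [testBit_grayVal, Nat.testBit_xor, testBit_grayVal, hsum, hsum, hsub, hsub,
    Nat.testBit_two_pow]
  rcases lt_trichotomy (i + 1) s with h | h | h
  · simp [h, show i < s by omega, show s ≠ i by omega]
  · simp [h, show i < s by omega, show s ≠ i by omega]
  · by_cases his : i = s
    · subst his; simp
    · simp [show ¬ i < s by omega, show ¬ i + 1 < s by omega, his, Ne.symm his,
        show i + 1 ≠ s by omega]

lemma grayVal_two_pow_succ_sub_one (s : ℕ) : grayVal (2 ^ (s + 1) - 1) = 2 ^ s := by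
  have h := grayVal_two_pow_add (Nat.sub_lt (Nat.two_pow_pos s) one_pos)
  rwa [Nat.sub_self, show grayVal 0 = 0 from rfl, Nat.xor_zero,
    show 2 ^ s + (2 ^ s - 1) = 2 ^ (s + 1) - 1 by rw [pow_succ]; omega] at h

lemma grayVal_two_pow_succ (s : ℕ) : grayVal (2 ^ (s + 1)) = 2 ^ (s + 1) ^^^ 2 ^ s := by
  simpa [grayVal_two_pow_succ_sub_one] using grayVal_two_pow_add (Nat.two_pow_pos (s + 1))

lemma grayVal_two_pow_sub_one_add {s j : ℕ} (hj0 : 0 < j) (hj : j ≤ 2 ^ s) :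
    grayVal (2 ^ s - 1 + j) = 2 ^ s ^^^ grayVal (2 ^ s - j) := by
  have h := grayVal_two_pow_add (s := s) (u := j - 1) (by omega)
  rwa [show 2 ^ s + (j - 1) = 2 ^ s - 1 + j by omega,
    show 2 ^ s - 1 - (j - 1) = 2 ^ s - j by omega] at h

def weight (n v : ℕ) : ℕ := ∑ i ∈ range n, (v.testBit i).toNat

lemma weight_xor_add_two_mul_weight_and (n a b : ℕ) :
    weight n (a ^^^ b) + 2 * weight n (a &&& b) = weight n a + weight n b := by
  simp only [weight, mul_sum, ← sum_add_distrib, Nat.testBit_xor, Nat.testBit_and]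
  refine sum_congr rfl fun i _ => ?_
  cases a.testBit i <;> cases b.testBit i <;> rfl

lemma weight_xor_of_disjoint {n a b : ℕ} (h : ∀ i, a.testBit i = true → b.testBit i = false) :
    weight n (a ^^^ b) = weight n a + weight n b := by
  have hab : a &&& b = 0 := Nat.eq_of_testBit_eq fun i => by
    cases ha : a.testBit i <;> simp [Nat.testBit_and, ha, h i]
  have := weight_xor_add_two_mul_weight_and n a b
  rwa [hab, show weight n 0 = 0 by simp [weight], mul_zero, add_zero] at this

lemma weight_xor_of_lt_two_pow {n s a b : ℕ} (ha : ∀ i < s, a.testBit i = false)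
    (hb : b < 2 ^ s) : weight n (a ^^^ b) = weight n a + weight n b :=
  weight_xor_of_disjoint fun i hi =>
    Nat.testBit_lt_two_pow (hb.trans_le (Nat.pow_le_pow_right two_pos
      (not_lt.mp fun his => by simp [ha i his] at hi)))

lemma weight_two_pow {n i : ℕ} (hi : i < n) : weight n (2 ^ i) = 1 := by
  rw [weight, sum_eq_single_of_mem i (mem_range.mpr hi) fun j _ hj => by
    simp [Ne.symm hj]]
  simp

lemma weight_xor_two_pow {n i v : ℕ} (hi : i < n) (hv : v.testBit i = false) :
    weight n (v ^^^ 2 ^ i) = weight n v + 1 := by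
  rw [weight_xor_of_disjoint (fun j hj => ?_), weight_two_pow hi]
  rw [Nat.testBit_two_pow, decide_eq_false_iff_not]
  rintro rfl
  simp [hv] at hj

lemma weight_xor_two_pow_of_testBit {n i v : ℕ} (hi : i < n) (hv : v.testBit i = true) :
    weight n (v ^^^ 2 ^ i) + 1 = weight n v := by
  rw [← weight_xor_two_pow hi (by simp [Nat.testBit_xor, hv]), xor_cancel_right]

lemma weight_xor_two_pow_xor_two_pow {n a b v : ℕ} (ha : a < n) (hb : b < n)
    (hva : v.testBit a = true) (hvb : v.testBit b = false) :
    weight n (v ^^^ 2 ^ a ^^^ 2 ^ b) = weight n v := by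
  have hab : a ≠ b := by rintro rfl; simp [hva] at hvb
  rw [weight_xor_two_pow hb (by simp [Nat.testBit_xor, hvb, hab]),
    weight_xor_two_pow_of_testBit ha hva]

lemma weight_pos {n v : ℕ} (h0 : v ≠ 0) (hv : v < 2 ^ n) : 0 < weight n v := by
  obtain ⟨i, hi⟩ := Nat.exists_testBit_of_ne_zero h0
  have hin : i < n := by
    by_contra! h
    simp [Nat.testBit_lt_two_pow (hv.trans_le (Nat.pow_le_pow_right two_pos h))] at hi
  exact (single_le_sum (fun _ _ => Nat.zero_le _) (mem_range.mpr hin)).trans_lt' (by simp [hi])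

lemma weight_eq_weight_div_two_add_mod_two {n v : ℕ} (hv : v < 2 ^ n) :
    weight n v = weight n (v / 2) + v % 2 := by
  have h := (sum_range_succ (fun i => (v.testBit i).toNat) n).symm.trans
    (sum_range_succ' (fun i => (v.testBit i).toNat) n)
  rcases Nat.mod_two_eq_zero_or_one v with h2 | h2 <;>
    simpa [weight, Nat.testBit_lt_two_pow hv, Nat.testBit_div_two, h2] using h

lemma weight_grayVal_mod_two {n m : ℕ} (hm : m < 2 ^ n) : weight n (grayVal m) % 2 = m % 2 := by
  have h := weight_xor_add_two_mul_weight_and n m (m / 2)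
  rw [← grayVal, weight_eq_weight_div_two_add_mod_two hm] at h
  omega

def bits (n v : ℕ) : List Bool := (List.range n).map v.testBit

@[simp] lemma length_bits (n v : ℕ) : (bits n v).length = n := by simp [bits]

@[simp] lemma getElem_bits {n v j : ℕ} (h : j < (bits n v).length) :
    (bits n v)[j] = v.testBit j := by
  simp [bits]

lemma bits_succ (n v : ℕ) : bits (n + 1) v = bits n v ++ [v.testBit n] := by
  simp [bits, List.range_succ]

lemma bits_congr {n v w : ℕ} (h : ∀ i < n, v.testBit i = w.testBit i) : bits n v = bits n w :=
  List.map_congr_left fun i hi => h i (List.mem_range.mp hi)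

lemma eq_of_bits_eq {n v w : ℕ} (hv : v < 2 ^ n) (hw : w < 2 ^ n) (h : bits n v = bits n w) :
    v = w := by
  refine Nat.eq_of_testBit_eq fun i => ?_
  by_cases hi : i < n
  · simpa [bits, hi] using congrArg (·[i]?) h
  · rw [Nat.testBit_lt_two_pow (hv.trans_le (Nat.pow_le_pow_right two_pos (not_lt.mp hi))),
      Nat.testBit_lt_two_pow (hw.trans_le (Nat.pow_le_pow_right two_pos (not_lt.mp hi)))]

lemma count_true_bits (n v : ℕ) : (bits n v).count true = weight n v := by
  induction n with
  | zero => rfl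
  | succ n ih =>
    rw [bits_succ, List.count_append, ih, weight, weight, sum_range_succ]
    cases v.testBit n <;> rfl

lemma flipBit_bits {n v j : ℕ} (hj : j < n) :
    flipBit (bits n v) (j + 1) = bits n (v ^^^ 2 ^ j) := by
  refine List.ext_getElem (by simp [flipBit]) fun i h _ => ?_
  simp only [flipBit, Nat.add_sub_cancel, List.getElem_set, getElem_bits, Nat.testBit_xor,
    Nat.testBit_two_pow, List.getD_eq_getElem _ _ (by simpa using hj : j < (bits n v).length)]
  by_cases hij : j = i <;> simp [hij]

lemma zipWith_or_bits (n v w : ℕ) :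
    List.zipWith (· || ·) (bits n v) (bits n w) = bits n (v ||| w) :=
  List.ext_getElem (by simp) fun i _ _ => by simp [Nat.testBit_or]

lemma gray_eq (n : ℕ) : gray n = (List.range (2 ^ n)).map (bits n ∘ grayVal) := by
  induction n with
  | zero => rfl
  | succ n ih =>
    rw [gray, ih, pow_succ, mul_two, List.range_add, List.map_append, List.map_map,
      ← List.map_reverse, List.map_map, List.map_map, List.range_eq_range', List.reverse_range',
      List.map_map, ← List.range_eq_range']
    congr 1
    · refine List.map_congr_left fun m hm => ?_
      have hm : grayVal m < 2 ^ n := grayVal_lt_two_pow (List.mem_range.mp hm)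
      simp [bits_succ, Nat.testBit_lt_two_pow hm]
    · refine List.map_congr_left fun j hj => ?_
      have hj : j < 2 ^ n := List.mem_range.mp hj
      have hlt : grayVal (2 ^ n - 1 - j) < 2 ^ n := grayVal_lt_two_pow (by omega)
      simp only [Function.comp_apply, grayVal_two_pow_add hj, bits_succ, Nat.testBit_xor,
        Nat.testBit_two_pow_self, Nat.testBit_lt_two_pow hlt, zero_add]
      refine congrArg (· ++ [true]) (bits_congr fun i hi => ?_)
      simp [Nat.testBit_xor, hi.ne']

lemma length_gray (n : ℕ) : (gray n).length = 2 ^ n := by simp [gray_eq]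

lemma getElem_gray {n m : ℕ} (h : m < (gray n).length) : (gray n)[m] = bits n (grayVal m) := by
  simp [gray_eq]

lemma nodup_gray (n : ℕ) : (gray n).Nodup := by
  rw [gray_eq]
  refine List.nodup_range.map_on fun a ha b hb hab => grayVal_injective ?_
  exact eq_of_bits_eq (grayVal_lt_two_pow (List.mem_range.mp ha))
    (grayVal_lt_two_pow (List.mem_range.mp hb)) hab

lemma exists_consecutive_getElem?_filter {α : Type*} {G : List α} {P : α → Bool} {i d : ℕ}
    (hd : 0 < d) (hid : i + d < G.length) (hPi : P (G[i]'(by omega)) = true)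
    (hPid : P G[i + d] = true)
    (hgap : ∀ j (hj : j < G.length), i < j → j < i + d → P G[j] = false) :
    ∃ t, (G.filter P)[t]? = some (G[i]'(by omega)) ∧ (G.filter P)[t + 1]? = some G[i + d] := by
  set M := (G.drop (i + 1)).take (d - 1)
  have hG : G = G.take i ++ G[i] :: (M ++ G[i + d] :: G.drop (i + d + 1)) := by
    conv_lhs => rw [← List.take_append_drop i G, List.drop_eq_getElem_cons (by omega),
      ← List.take_append_drop (d - 1) (G.drop (i + 1)), List.drop_drop,
      show i + 1 + (d - 1) = i + d by omega, List.drop_eq_getElem_cons hid]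
  have hM : M.filter P = [] := List.filter_eq_nil_iff.mpr fun y hy => by
    obtain ⟨j, hj, rfl⟩ := List.getElem_of_mem hy
    simp only [M, List.length_take, List.length_drop] at hj
    simpa [M] using hgap (i + 1 + j) (by omega) (by omega) (by omega)
  have hfilter : G.filter P =
      (G.take i).filter P ++ G[i] :: G[i + d] :: (G.drop (i + d + 1)).filter P := by
    conv_lhs => rw [hG]
    rw [List.filter_append, List.filter_cons_of_pos hPi, List.filter_append, hM, List.nil_append,
      List.filter_cons_of_pos hPid]
  exact ⟨((G.take i).filter P).length, by simp [hfilter], by simp [hfilter]⟩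

def IsNextOfWeight (n k m d : ℕ) : Prop :=
  0 < d ∧ m + d < 2 ^ n ∧ weight n (grayVal (m + d)) = k ∧
    ∀ j, 0 < j → j < d → weight n (grayVal (m + j)) ≠ k

lemma weight_of_mem_grayLevel {n k m : ℕ} (h : bits n (grayVal m) ∈ grayLevel n k) :
    weight n (grayVal m) = k := by
  simpa [grayLevel, count_true_bits] using (List.mem_filter.mp h).2

lemma grayLevel_get_of_isNextOfWeight {n k m d : ℕ} (hnext : IsNextOfWeight n k m d)
    (a b : Fin (grayLevel n k).length) (hab : (b : ℕ) = (a + 1) % (grayLevel n k).length)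
    (ha : (grayLevel n k).get a = bits n (grayVal m)) :
    (grayLevel n k).get b = bits n (grayVal (m + d)) := by
  obtain ⟨hd, hmd, hk, hgap⟩ := hnext
  have hlen := length_gray n
  have hP (j : ℕ) (hj : j < (gray n).length) :
      decide ((gray n)[j].count true = k) = decide (weight n (grayVal j) = k) := by
    rw [getElem_gray, count_true_bits]
  obtain ⟨t, ht, ht1⟩ := exists_consecutive_getElem?_filter (G := gray n) (i := m)
    (P := fun x => decide (x.count true = k)) hd (by omega)
    (by rw [hP, decide_eq_true_iff]; exact weight_of_mem_grayLevel (ha ▸ List.get_mem _ _))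
    (by rw [hP, decide_eq_true_iff, hk])
    (fun j hj h1 h2 => by
      rw [hP, decide_eq_false_iff_not]
      simpa [Nat.add_sub_cancel' h1.le] using hgap (j - m) (by omega) (by omega))
  change (grayLevel n k)[t]? = _ at ht
  change (grayLevel n k)[t + 1]? = _ at ht1
  obtain ⟨htlen, ht⟩ := List.getElem?_eq_some_iff.mp ht
  obtain ⟨ht1len, ht1⟩ := List.getElem?_eq_some_iff.mp ht1
  have hta : t = a := by
    refine ((nodup_gray n).filter _).getElem_inj_iff.mp
      (?_ : (grayLevel n k)[t] = (grayLevel n k)[a])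
    rw [ht, getElem_gray, ← ha]
    rfl
  have hb : (b : ℕ) = t + 1 := by rw [hab, ← hta, Nat.mod_eq_of_lt ht1len]
  simp only [List.get_eq_getElem, hb, ht1, getElem_gray]

lemma lt_of_testBit_of_lt_two_pow {n v i : ℕ} (hi : v.testBit i = true) (hv : v < 2 ^ n) :
    i < n :=
  (Nat.pow_lt_pow_iff_right (by norm_num)).mp ((Nat.ge_two_pow_of_testBit hi).trans_lt hv)

lemma add_lt_two_pow_of_mod_add_lt {n m j s : ℕ} (hs : s ≤ n) (hm : m < 2 ^ n)
    (h : m % 2 ^ s + j < 2 ^ s) : m + j < 2 ^ n := by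
  have hn : 2 ^ n = 2 ^ s * 2 ^ (n - s) := by rw [← pow_add, Nat.add_sub_cancel' hs]
  have hq : m / 2 ^ s < 2 ^ (n - s) := Nat.div_lt_of_lt_mul (hn ▸ hm)
  calc m + j = 2 ^ s * (m / 2 ^ s) + (m % 2 ^ s + j) := by rw [← add_assoc, Nat.div_add_mod]
    _ < 2 ^ s * (m / 2 ^ s + 1) := by rw [mul_add_one]; omega
    _ ≤ 2 ^ n := hn ▸ Nat.mul_le_mul_left _ hq

lemma testBit_eq_testBit_zero_of_grayVal {m L i : ℕ}
    (hlow : ∀ j < L, (grayVal m).testBit j = false) (hi : i ≤ L) :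
    m.testBit i = m.testBit 0 := by
  induction i with
  | zero => rfl
  | succ i ih =>
    have h : m.testBit i = m.testBit (i + 1) := by simpa [testBit_grayVal] using hlow i (by omega)
    rw [← h, ih (by omega)]

lemma mod_two_pow_eq_zero_of_even {m L : ℕ} (hm : m % 2 = 0)
    (hlow : ∀ j < L, (grayVal m).testBit j = false) : m % 2 ^ (L + 1) = 0 := by
  refine Nat.eq_of_testBit_eq fun i => ?_
  rw [Nat.testBit_mod_two_pow, Nat.zero_testBit]
  by_cases hi : i < L + 1
  · simp [hi, testBit_eq_testBit_zero_of_grayVal hlow (by omega : i ≤ L), Nat.testBit_zero, hm]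
  · simp [hi]

lemma mod_two_pow_eq_of_odd {m L : ℕ} (hm : m % 2 = 1) (hL : (grayVal m).testBit L = true)
    (hlow : ∀ j < L, (grayVal m).testBit j = false) : m % 2 ^ (L + 2) = 2 ^ (L + 1) - 1 := by
  have hlowm (i : ℕ) (hi : i ≤ L) := testBit_eq_testBit_zero_of_grayVal hlow hi
  have hm0 : m.testBit 0 = true := by simp [Nat.testBit_zero, hm]
  have hL1 : m.testBit (L + 1) = false := by
    simpa [testBit_grayVal, hlowm L le_rfl, hm0] using hL
  refine Nat.eq_of_testBit_eq fun i => ?_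
  rw [Nat.testBit_mod_two_pow, Nat.testBit_two_pow_sub_one]
  by_cases hi : i < L + 1
  · simp [hi, show i < L + 2 by omega, hlowm i (by omega), hm0]
  · by_cases hiL : i = L + 1
    · simp [hiL, hL1]
    · simp [hi, show ¬ i < L + 2 by omega]

lemma isNextOfWeight_of_even {n m L : ℕ} (hm2 : m % 2 = 0) (hm : m < 2 ^ n)
    (hL : (grayVal m).testBit L = true) (hlow : ∀ j < L, (grayVal m).testBit j = false)
    (hup : weight n (grayVal (m + 1)) = weight n (grayVal m) + 1) :
    1 ≤ L ∧ grayVal (m + 2 ^ L) = grayVal m ^^^ 2 ^ L ^^^ 2 ^ (L - 1) ∧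
      IsNextOfWeight n (weight n (grayVal m)) m (2 ^ L) := by
  have hLn : L < n := lt_of_testBit_of_lt_two_pow hL (grayVal_lt_two_pow hm)
  have hmod := mod_two_pow_eq_zero_of_even hm2 hlow
  have hstep (j : ℕ) (hj : j < 2 ^ (L + 1)) : grayVal (m + j) = grayVal m ^^^ grayVal j := by
    have h := grayVal_add_of_mod_add_lt (m := m) (j := j) (s := L + 1) (by rwa [hmod, zero_add])
    rwa [hmod, zero_add, show grayVal 0 = 0 from rfl, xor_zero] at h
  have hL1 : 1 ≤ L := by
    by_contra h
    obtain rfl : L = 0 := by omega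
    have hdown := weight_xor_two_pow_of_testBit hLn hL
    rw [hstep 1 (by simp), show grayVal 1 = 2 ^ 0 from rfl] at hup
    omega
  have hnext : grayVal (m + 2 ^ L) = grayVal m ^^^ 2 ^ L ^^^ 2 ^ (L - 1) := by
    obtain ⟨l, rfl⟩ : ∃ l, L = l + 1 := ⟨L - 1, by omega⟩
    rw [hstep _ (Nat.pow_lt_pow_right one_lt_two (by omega)), grayVal_two_pow_succ, xor_assoc,
      Nat.add_sub_cancel]
  refine ⟨hL1, hnext, Nat.two_pow_pos L,
    add_lt_two_pow_of_mod_add_lt hLn hm (by rw [hmod, zero_add, pow_succ]; omega), ?_, ?_⟩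
  · rw [hnext]
    exact weight_xor_two_pow_xor_two_pow hLn (by omega) hL (hlow _ (by omega))
  · intro j hj0 hj
    have hgj : grayVal j < 2 ^ L := grayVal_lt_two_pow hj
    have hpos := weight_pos (n := n) (fun h => hj0.ne' (eq_zero_of_grayVal_eq_zero h))
      (hgj.trans (Nat.pow_lt_pow_right one_lt_two hLn))
    rw [hstep j (by rw [pow_succ]; omega), weight_xor_of_lt_two_pow hlow hgj]
    omega

lemma grayVal_add_of_mod_eq_two_pow_sub_one {m L j : ℕ}
    (hmod : m % 2 ^ (L + 2) = 2 ^ (L + 1) - 1) (hj : j ≤ 2 ^ (L + 1)) :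
    grayVal (m + j) = grayVal m ^^^ 2 ^ L ^^^ grayVal (2 ^ (L + 1) - 1 + j) := by
  have hpow : 2 ^ (L + 2) = 2 * 2 ^ (L + 1) := by ring
  have h := grayVal_add_of_mod_add_lt (m := m) (j := j) (s := L + 2) (by omega)
  rwa [hmod, grayVal_two_pow_succ_sub_one] at h

lemma isNextOfWeight_of_odd {n m L : ℕ} (hm2 : m % 2 = 1) (hm : m + 1 < 2 ^ n)
    (hL : (grayVal m).testBit L = true) (hlow : ∀ j < L, (grayVal m).testBit j = false)
    (hup : weight n (grayVal (m + 1)) = weight n (grayVal m) + 1) :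
    L + 1 < n ∧ (grayVal m).testBit (L + 1) = false ∧
      grayVal (m + 2 ^ (L + 1)) = grayVal m ^^^ 2 ^ L ^^^ 2 ^ (L + 1) ∧
      IsNextOfWeight n (weight n (grayVal m)) m (2 ^ (L + 1)) := by
  have hmod := mod_two_pow_eq_of_odd hm2 hL hlow
  have hpow : 2 ^ (L + 2) = 2 * 2 ^ (L + 1) := by ring
  have hstep (j : ℕ) (hj : j ≤ 2 ^ (L + 1)) := grayVal_add_of_mod_eq_two_pow_sub_one hmod hj
  have hstep1 : grayVal (m + 1) = grayVal m ^^^ 2 ^ (L + 1) := by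
    rw [hstep 1 Nat.one_le_two_pow, Nat.sub_add_cancel Nat.one_le_two_pow, grayVal_two_pow_succ,
      xor_assoc, xor_xor_cancel_comm_assoc]
  have hLn : L + 1 < n := by
    refine (Nat.pow_lt_pow_iff_right (by norm_num : 1 < 2)).mp ?_
    rw [← xor_cancel_left (grayVal m) (2 ^ (L + 1)), ← hstep1]
    exact Nat.xor_lt_two_pow (grayVal_lt_two_pow (by omega)) (grayVal_lt_two_pow hm)
  have hL1 : (grayVal m).testBit (L + 1) = false := by
    by_contra h
    have hdown := weight_xor_two_pow_of_testBit hLn (by simpa using h)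
    rw [hstep1] at hup
    omega
  have hnext : grayVal (m + 2 ^ (L + 1)) = grayVal m ^^^ 2 ^ L ^^^ 2 ^ (L + 1) := by
    rw [hstep _ le_rfl, show 2 ^ (L + 1) - 1 + 2 ^ (L + 1) = 2 ^ (L + 2) - 1 by omega,
      grayVal_two_pow_succ_sub_one]
  refine ⟨hLn, hL1, hnext, Nat.two_pow_pos _,
    add_lt_two_pow_of_mod_add_lt (s := L + 2) hLn (by omega) (by rw [hmod]; omega), ?_, ?_⟩
  · rw [hnext]
    exact weight_xor_two_pow_xor_two_pow (by omega) hLn hL hL1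
  · intro j hj0 hj
    have hgu : grayVal (2 ^ (L + 1) - j) < 2 ^ (L + 1) := grayVal_lt_two_pow (by omega)
    have hpos := weight_pos (n := n) (fun h => by have := eq_zero_of_grayVal_eq_zero h; omega)
      (hgu.trans (Nat.pow_lt_pow_right one_lt_two hLn))
    have hhigh : ∀ i < L + 1, (grayVal m ^^^ 2 ^ L ^^^ 2 ^ (L + 1)).testBit i = false := by
      intro i hi
      rcases (Nat.lt_succ_iff_lt_or_eq.mp hi) with hi | rfl
      · simp [Nat.testBit_xor, hlow i hi, show L ≠ i by omega, show L + 1 ≠ i by omega]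
      · simp [Nat.testBit_xor, hL]
    rw [hstep j hj.le, grayVal_two_pow_sub_one_add hj0 hj.le, ← xor_assoc,
      weight_xor_of_lt_two_pow hhigh hgu, weight_xor_two_pow_xor_two_pow (by omega) hLn hL hL1]
    omega

lemma idxOf_true_bits {n v : ℕ} (hv : 0 < weight n v) :
    (bits n v).idxOf true < n ∧ v.testBit ((bits n v).idxOf true) = true ∧
      ∀ j < (bits n v).idxOf true, v.testBit j = false := by
  have hlt : (bits n v).idxOf true < (bits n v).length :=
    List.idxOf_lt_length_iff.mpr (List.count_pos_iff.mp (count_true_bits n v ▸ hv))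
  refine ⟨by simpa using hlt, by rw [← getElem_bits hlt]; exact List.getElem_idxOf hlt,
    fun j hj => by simpa using List.not_of_lt_findIdx hj⟩

lemma bits_xor_two_pow_xor_two_pow {n v a b : ℕ} (ha : a < n) (hb : b < n)
    (hva : v.testBit a = true) (hvb : v.testBit b = false) :
    bits n (v ^^^ 2 ^ a ^^^ 2 ^ b) = flipBit (flipBit (bits n v) (a + 1)) (b + 1) ∧
      List.zipWith (· || ·) (bits n v) (bits n (v ^^^ 2 ^ a ^^^ 2 ^ b)) =
        flipBit (bits n v) (b + 1) := by
  rw [flipBit_bits ha, flipBit_bits hb, flipBit_bits hb, zipWith_or_bits]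
  refine ⟨rfl, congrArg _ (Nat.eq_of_testBit_eq fun i => ?_)⟩
  by_cases hia : a = i <;> by_cases hib : b = i <;> simp_all [Nat.testBit_or, Nat.testBit_xor]

lemma exists_index_of_upward {n k : ℕ} {x : List Bool}
    (hup : ∃ p q : Fin (gray n).length, (gray n).get p = x ∧
      (q : ℕ) = ((p : ℕ) + 1) % (gray n).length ∧ ((gray n).get q).count true = k + 1) :
    ∃ m, m + 1 < 2 ^ n ∧ x = bits n (grayVal m) ∧ weight n (grayVal (m + 1)) = k + 1 := by
  obtain ⟨p, q, hpx, hq, hqk⟩ := hup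
  rw [List.get_eq_getElem, getElem_gray, count_true_bits] at hqk
  have hp : (p : ℕ) < 2 ^ n := length_gray n ▸ p.isLt
  rw [hq.trans (congrArg _ (length_gray n))] at hqk
  have hp1 : (p : ℕ) + 1 < 2 ^ n := by
    by_contra h
    rw [show (p : ℕ) + 1 = 2 ^ n by omega, Nat.mod_self] at hqk
    simp [weight, show grayVal 0 = 0 from rfl] at hqk
  refine ⟨p, hp1, by rw [← hpx, List.get_eq_getElem, getElem_gray], ?_⟩
  rwa [Nat.mod_eq_of_lt hp1] at hqk

end GrayCode

open GrayCode in
theorem stmt9_general (n k : ℕ) (hk0 : 0 < k)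
    (a b : Fin (grayLevel n k).length)
    (hab : (b : ℕ) = ((a : ℕ) + 1) % (grayLevel n k).length)
    (x : List Bool) (hx : x = (grayLevel n k).get a)
    (hup : ∃ p q : Fin (gray n).length, (gray n).get p = x ∧
      (q : ℕ) = ((p : ℕ) + 1) % (gray n).length ∧
      ((gray n).get q).count true = k + 1) :
    (grayLevel n k).get b
        = flipBit (flipBit x (x.idxOf true + 1))
            (if Even k then (x.idxOf true + 1) - 1 else (x.idxOf true + 1) + 1)
    ∧ List.zipWith (· || ·) x ((grayLevel n k).get b)
        = flipBit x (if Even k then (x.idxOf true + 1) - 1 else (x.idxOf true + 1) + 1) := by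
  obtain ⟨m, hm, rfl, hwup⟩ := exists_index_of_upward hup
  have hk : weight n (grayVal m) = k := weight_of_mem_grayLevel (hx ▸ List.get_mem _ _)
  subst hk
  obtain ⟨hLn, hL, hlow⟩ := idxOf_true_bits hk0
  have hpar : Even (weight n (grayVal m)) ↔ m % 2 = 0 := by
    rw [Nat.even_iff, weight_grayVal_mod_two (by omega)]
  rcases Nat.mod_two_eq_zero_or_one m with h2 | h2
  · obtain ⟨hL1, hnext, hd⟩ := isNextOfWeight_of_even h2 (by omega) hL hlow hwup
    rw [if_pos (hpar.mpr h2), grayLevel_get_of_isNextOfWeight hd a b hab hx.symm, hnext,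
      Nat.add_sub_cancel]
    have h := bits_xor_two_pow_xor_two_pow hLn (by omega) hL (hlow _ (Nat.sub_one_lt_of_lt hL1))
    rwa [Nat.sub_add_cancel hL1] at h
  · obtain ⟨hLn1, hL1, hnext, hd⟩ := isNextOfWeight_of_odd h2 hm hL hlow hwup
    rw [if_neg (by rw [hpar]; omega), grayLevel_get_of_isNextOfWeight hd a b hab hx.symm, hnext]
    exact bits_xor_two_pow_xor_two_pow hLn hLn1 hL hL1

/-- For an upward vertex `x` of weight `k` (`0 < k < n`) with first 1 at (1-based)
position `i`, the successor of `x` in `Γ_{n,k}` is obtained by flipping bits `i-1` and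
`i` (`k` even) or bits `i+1` and `i` (`k` odd), and the common upper neighbor
`up(x, s(x))` (the bitwise OR) is obtained by flipping bit `i-1` (`k` even) or
bit `i+1` (`k` odd). -/
theorem stmt9 (n k : ℕ) (hn : 1 ≤ n) (hk0 : 0 < k) (hkn : k < n)
    (a b : Fin (grayLevel n k).length)
    (hab : (b : ℕ) = ((a : ℕ) + 1) % (grayLevel n k).length)
    (x : List Bool) (hx : x = (grayLevel n k).get a)
    (hup : ∃ p q : Fin (gray n).length, (gray n).get p = x ∧
      (q : ℕ) = ((p : ℕ) + 1) % (gray n).length ∧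
      ((gray n).get q).count true = k + 1) :
    (grayLevel n k).get b
        = flipBit (flipBit x (x.idxOf true + 1))
            (if Even k then (x.idxOf true + 1) - 1 else (x.idxOf true + 1) + 1)
    ∧ List.zipWith (· || ·) x ((grayLevel n k).get b)
        = flipBit x (if Even k then (x.idxOf true + 1) - 1 else (x.idxOf true + 1) + 1) :=
  stmt9_general n k hk0 a b hab x hx hup
end

section
/- For any k ≥ 1 and 1 ≤ c ≤ k, the fraction of vertices of Q_{2k+1,[k−c,k+1+c]} missed by the trimmed reflected Gray code cycle is at most 1/(2(c+1)); concretely, 2·C(2k, k+c+1) ≤ v/(2(c+1)) where v = 2·∑_{i=k+1}^{k+c+1} C(2k+1, i). -/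
/-! Pascal's rule writes `C(2k+1, k+c+1)` as `C(2k, k+c) + C(2k, k+c+1)`, and both binomial rows
are decreasing past their middle, so `2·C(2k, k+c+1) ≤ C(2k+1, k+c+1)`; the latter is the smallest
of the `c + 1` terms `C(2k+1, i)`, `k+1 ≤ i ≤ k+c+1`, and hence at most their average. -/

namespace Nat

theorem choose_succ_le_choose_of_half_le {n r : ℕ} (h : n / 2 ≤ r) :
    n.choose (r + 1) ≤ n.choose r := by
  refine Nat.le_of_mul_le_mul_right ?_ r.succ_pos
  calc n.choose (r + 1) * (r + 1) = n.choose r * (n - r) := choose_succ_right_eq n r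
    _ ≤ n.choose r * (r + 1) := by gcongr; omega

theorem choose_antitoneOn (n : ℕ) : AntitoneOn n.choose (Set.Ici (n / 2)) :=
  antitoneOn_nat_Ici_of_succ_le fun _ hr => choose_succ_le_choose_of_half_le hr

theorem two_mul_choose_succ_le_choose_succ_succ {n r : ℕ} (h : n / 2 ≤ r) :
    2 * n.choose (r + 1) ≤ (n + 1).choose (r + 1) := by
  rw [choose_succ_succ, two_mul]
  gcongr
  exact choose_succ_le_choose_of_half_le h

end Nat

theorem Finset.card_Icc_smul_le_sum_of_antitoneOn {M : Type*} [AddCommMonoid M] [PartialOrder M]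
    [IsOrderedAddMonoid M] {f : ℕ → M} {a b : ℕ} (hf : AntitoneOn f (Set.Icc a b)) :
    (b + 1 - a) • f b ≤ ∑ i ∈ Finset.Icc a b, f i := by
  rcases lt_or_ge b a with hba | hab
  · simp [Nat.sub_eq_zero_of_le hba, Finset.Icc_eq_empty_of_lt hba]
  rw [← Nat.card_Icc]
  refine Finset.card_nsmul_le_sum _ _ _ fun i hi => ?_
  rw [Finset.mem_Icc] at hi
  exact hf ⟨hi.1, hi.2⟩ ⟨hab, le_rfl⟩ hi.2

theorem stmt16_general (k c : ℕ) :
    (2 * ((2 * k).choose (k + c + 1)) : ℝ) ≤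
      (2 * ∑ i ∈ Finset.Icc (k + 1) (k + c + 1), ((2 * k + 1).choose i) : ℝ)
        / (2 * (c + 1)) := by
  have hsum : (c + 1) * (2 * (2 * k).choose (k + c + 1))
      ≤ ∑ i ∈ Finset.Icc (k + 1) (k + c + 1), (2 * k + 1).choose i :=
    calc (c + 1) * (2 * (2 * k).choose (k + c + 1))
        ≤ (c + 1) * (2 * k + 1).choose (k + c + 1) := by
          gcongr
          exact Nat.two_mul_choose_succ_le_choose_succ_succ (by omega)
      _ = (k + c + 1 + 1 - (k + 1)) • (2 * k + 1).choose (k + c + 1) := by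
          rw [smul_eq_mul]; congr 1; omega
      _ ≤ ∑ i ∈ Finset.Icc (k + 1) (k + c + 1), (2 * k + 1).choose i :=
          Finset.card_Icc_smul_le_sum_of_antitoneOn <|
            (Nat.choose_antitoneOn _).mono fun i hi => by
              simp only [Set.mem_Icc, Set.mem_Ici] at hi ⊢; omega
  rw [le_div_iff₀ (by positivity)]
  have hsumR : ((c : ℝ) + 1) * (2 * (2 * k).choose (k + c + 1))
      ≤ ∑ i ∈ Finset.Icc (k + 1) (k + c + 1), ((2 * k + 1).choose i : ℝ) := by
    exact_mod_cast hsum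
  push_cast
  linarith

/-- The number of vertices missed by the trimmed reflected Gray code in
`Q_{2k+1,[k-c,k+1+c]}`, namely `2·C(2k,k+c+1)`, is at most a `1/(2(c+1))`-fraction of
the total number `v = 2·∑_{i=k+1}^{k+c+1} C(2k+1,i)` of vertices. -/
theorem stmt16 (k c : ℕ) (hk : 1 ≤ k) (hc1 : 1 ≤ c) (hck : c ≤ k) :
    (2 * ((2 * k).choose (k + c + 1)) : ℝ) ≤
      (2 * ∑ i ∈ Finset.Icc (k + 1) (k + c + 1), ((2 * k + 1).choose i) : ℝ)
        / (2 * (c + 1)) :=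
  stmt16_general k c
end
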